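/- In the fractional-order HK model with opinions initially in [0,1], all opinions remain in [0,1] for every time step k ≥ 0. -/

import Mathlib

open Finset Filter Topology

/-- The Grünwald–Letnikov coefficient `a_k^{(α)} = (-1)^k * α(α-1)⋯(α-k+1)/k!`
(with `a_0 = 1`). -/
noncomputable def glCoeff (α : ℝ) (k : ℕ) : ℝ :=
  (-1) ^ k * (∏ i ∈ Finset.range k, (α - (i : ℝ))) / (Nat.factorial k : ℝ)

/-- Neighbor set of agent `i` at time `k` (includes `i` itself). -/
noncomputable def nbr {n : ℕ} (ε : ℝ) (x : ℕ → Fin n → ℝ) (k : ℕ) (i : Fin n) :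
    Finset (Fin n) :=
  Finset.univ.filter (fun j => |x k i - x k j| ≤ ε)

/-- The fractional-order Hegselmann–Krause dynamics. -/
def IsFracHK {n : ℕ} (ε α : ℝ) (x : ℕ → Fin n → ℝ) : Prop :=
  ∀ k i,
    x (k + 1) i =
      (∑ j ∈ (nbr ε x k i).erase i, x k j) / ((nbr ε x k i).card : ℝ) +
        (1 / ((nbr ε x k i).card : ℝ)) *
          ((∑ s ∈ Finset.range k, |glCoeff α (k + 1 - s)| * x s i) +
            (1 - ∑ s ∈ Finset.range k, |glCoeff α (k + 1 - s)|) * x k i)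

/-! The update of agent `i` is the average, over its `|I_i(k)|` neighbours, of the opinions `x_j(k)`
(`j ≠ i`) and of one memory term standing in for `x_i(k)`. The memory term combines past opinions
of `i` with weights `|a_m^{(α)}|` and `1 - ∑ |a_m^{(α)}|`. The last weight is nonnegative: since
`a_m^{(α)} ≤ 0` for `m ≥ 1`, Pascal's rule telescopes `∑_{m=1}^N |a_m^{(α)}| = 1 - a_N^{(α-1)}`,
and `a_N^{(α-1)} = ∏_{i<N} (i+1-α)/(i+1) ≥ 0`. So the update is an average of values in `[0, 1]`,
and strong induction on time closes the argument. -/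

section GrunwaldLetnikov

variable {α : ℝ}

lemma glCoeff_zero (α : ℝ) : glCoeff α 0 = 1 := by
  simp [glCoeff]

lemma glCoeff_succ (α : ℝ) (N : ℕ) :
    glCoeff α (N + 1) = glCoeff α N * ((N - α) / (N + 1)) := by
  simp only [glCoeff, prod_range_succ, pow_succ, Nat.factorial_succ, Nat.cast_mul]
  field_simp
  push_cast
  ring

/-- Pascal's rule `C(α, N+1) = C(α-1, N+1) + C(α-1, N)` in signed form. -/
lemma glCoeff_succ_eq_sub (α : ℝ) (N : ℕ) :
    glCoeff α (N + 1) = glCoeff (α - 1) (N + 1) - glCoeff (α - 1) N := by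
  have hshift : ∏ i ∈ range N, (α - ((i + 1 : ℕ) : ℝ)) = ∏ i ∈ range N, (α - 1 - (i : ℝ)) :=
    prod_congr rfl fun i _ => by push_cast; ring
  simp only [glCoeff, prod_range_succ' (fun i => α - (i : ℝ)), hshift, prod_range_succ,
    pow_succ, Nat.factorial_succ, Nat.cast_mul]
  field_simp
  push_cast
  ring

lemma glCoeff_sub_one_nonneg (hα : α ≤ 1) (N : ℕ) : 0 ≤ glCoeff (α - 1) N := by
  induction N with
  | zero => simp [glCoeff_zero]
  | succ N ih =>
    rw [glCoeff_succ]
    exact mul_nonneg ih (div_nonneg (by linarith) (by positivity))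

lemma glCoeff_succ_nonpos (hα : α ∈ Set.Icc (0 : ℝ) 1) (N : ℕ) : glCoeff α (N + 1) ≤ 0 := by
  have hN : (0 : ℝ) < N + 1 := by positivity
  have key : glCoeff α (N + 1) = -(glCoeff (α - 1) N * (α / (N + 1))) := by
    rw [glCoeff_succ_eq_sub, glCoeff_succ]
    field_simp
    ring
  rw [key, neg_nonpos]
  exact mul_nonneg (glCoeff_sub_one_nonneg hα.2 N) (div_nonneg hα.1 hN.le)

lemma sum_abs_glCoeff_succ (hα : α ∈ Set.Icc (0 : ℝ) 1) (N : ℕ) :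
    ∑ m ∈ range N, |glCoeff α (m + 1)| = 1 - glCoeff (α - 1) N := by
  have htelescope : ∀ m, |glCoeff α (m + 1)| = glCoeff (α - 1) m - glCoeff (α - 1) (m + 1) :=
    fun m => by rw [abs_of_nonpos (glCoeff_succ_nonpos hα m), glCoeff_succ_eq_sub]; ring
  simp only [htelescope, sum_range_sub', glCoeff_zero]

/-- Reindexed by `m = k - s`, this is `∑_{m=2}^{k+1} |a_m^{(α)}| ≤ ∑_{m=1}^{k+1} |a_m^{(α)}|`. -/
lemma sum_abs_glCoeff_memory_le_one (hα : α ∈ Set.Icc (0 : ℝ) 1) (k : ℕ) :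
    ∑ s ∈ range k, |glCoeff α (k + 1 - s)| ≤ 1 := by
  have hreflect : ∑ s ∈ range k, |glCoeff α (k + 1 - s)| = ∑ m ∈ range k, |glCoeff α (m + 2)| := by
    rw [← sum_range_reflect (fun m => |glCoeff α (m + 2)|) k]
    refine sum_congr rfl fun s hs => ?_
    rw [mem_range] at hs
    congr 3
    omega
  have hfull := sum_range_succ' (fun m => |glCoeff α (m + 1)|) k
  rw [sum_abs_glCoeff_succ hα] at hfull
  rw [hreflect]
  linarith [abs_nonneg (glCoeff α 1), glCoeff_sub_one_nonneg hα.2 (k + 1)]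

end GrunwaldLetnikov

section Averaging

variable {a b : ℝ}

lemma sum_mul_add_one_sub_sum_mul_mem_Icc {ι : Type*} {s : Finset ι} {w y : ι → ℝ} {z : ℝ}
    (hw : ∀ t ∈ s, 0 ≤ w t) (hw_sum : ∑ t ∈ s, w t ≤ 1) (hy : ∀ t ∈ s, y t ∈ Set.Icc a b)
    (hz : z ∈ Set.Icc a b) :
    ∑ t ∈ s, w t * y t + (1 - ∑ t ∈ s, w t) * z ∈ Set.Icc a b := by
  have hlow : ∑ t ∈ s, w t * a ≤ ∑ t ∈ s, w t * y t :=
    sum_le_sum fun t ht => mul_le_mul_of_nonneg_left (hy t ht).1 (hw t ht)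
  have hupp : ∑ t ∈ s, w t * y t ≤ ∑ t ∈ s, w t * b :=
    sum_le_sum fun t ht => mul_le_mul_of_nonneg_left (hy t ht).2 (hw t ht)
  rw [← sum_mul] at hlow hupp
  have hrest : 0 ≤ 1 - ∑ t ∈ s, w t := sub_nonneg.mpr hw_sum
  constructor <;> nlinarith [hz.1, hz.2]

lemma sum_erase_div_card_add_mem_Icc {ι : Type*} [DecidableEq ι] {s : Finset ι} {i : ι}
    (hi : i ∈ s) {f : ι → ℝ} {c : ℝ} (hf : ∀ j ∈ s, f j ∈ Set.Icc a b) (hc : c ∈ Set.Icc a b) :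
    (∑ j ∈ s.erase i, f j) / (#s : ℝ) + 1 / (#s : ℝ) * c ∈ Set.Icc a b := by
  have hcard : (0 : ℝ) < #s := by exact_mod_cast card_pos.mpr ⟨i, hi⟩
  have hcard_erase : ((#(s.erase i) : ℕ) : ℝ) = #s - 1 := by
    rw [card_erase_of_mem hi, Nat.cast_sub (card_pos.mpr ⟨i, hi⟩), Nat.cast_one]
  have hlow := card_nsmul_le_sum (s.erase i) f a fun j hj => (hf j (mem_of_mem_erase hj)).1
  have hupp := sum_le_card_nsmul (s.erase i) f b fun j hj => (hf j (mem_of_mem_erase hj)).2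
  rw [nsmul_eq_mul, hcard_erase] at hlow hupp
  rw [one_div_mul_eq_div, ← add_div, Set.mem_Icc, le_div_iff₀ hcard, div_le_iff₀ hcard]
  constructor <;> linarith [hc.1, hc.2]

end Averaging

lemma self_mem_nbr {n : ℕ} {ε : ℝ} (hε : 0 ≤ ε) (x : ℕ → Fin n → ℝ) (k : ℕ) (i : Fin n) :
    i ∈ nbr ε x k i := by
  simpa [nbr] using hε

theorem fracHK_opinions_stay_in_unit {n : ℕ} (ε α : ℝ) (hε : ε ∈ Set.Ioc (0:ℝ) 1)
    (hα : α ∈ Set.Ioo (0:ℝ) 1) (x : ℕ → Fin n → ℝ)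
    (hx0 : ∀ i, x 0 i ∈ Set.Icc (0:ℝ) 1) (hdyn : IsFracHK ε α x) :
    ∀ k (i : Fin n), x k i ∈ Set.Icc (0:ℝ) 1 := by
  intro k
  induction k using Nat.strong_induction_on with
  | _ k ih =>
  cases k with
  | zero => exact hx0
  | succ k =>
    intro i
    have hpast : ∀ s ∈ range k, x s i ∈ Set.Icc (0 : ℝ) 1 :=
      fun s hs => ih s (by rw [mem_range] at hs; omega) i
    have hnow := ih k k.lt_succ_self
    rw [hdyn k i]
    refine sum_erase_div_card_add_mem_Icc (self_mem_nbr hε.1.le x k i) (fun j _ => hnow j) ?_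
    exact sum_mul_add_one_sub_sum_mul_mem_Icc (fun _ _ => abs_nonneg _)
      (sum_abs_glCoeff_memory_le_one (Set.Ioo_subset_Icc_self hα) k) hpast (hnow i)
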